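/- There exists a universal constant c > 0 such that the following holds. Let G=(V,E) be a finite simple unweighted graph on n ≥ 3 vertices with m = |E| ≥ 2 edges, let eps ∈ (0, 1/18], let H be a (1±eps)-spectral sparsifier of G, and let u,v ∈ V with s := d_{hat H}(u,v) finite and s ≥ 1. Then R^G_{u,v} ≥ c * s^2 / (m * log n), and R^H_{u,v} ≥ c * s^2 / (m * log n). -/

import Mathlib

open scoped Classical
open Finset

/-- Laplacian quadratic form of a (weighted) graph:
`x ↦ ∑_{edges {u,v}} w(u,v) * (x u - x v)^2` (each edge counted once). -/
noncomputable def lapQF {V : Type*} [Fintype V] (H : SimpleGraph V) (w : V → V → ℝ)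
    (x : V → ℝ) : ℝ :=
  (1 / 2) * ∑ u : V, ∑ v : V, if H.Adj u v then w u v * (x u - x v) ^ 2 else 0

/-- Total weight of edges of `H` with one endpoint in `X` and the other in `Y`
(intended for disjoint `X`, `Y`). -/
noncomputable def cutWeight {V : Type*} [Fintype V] (H : SimpleGraph V) (w : V → V → ℝ)
    (X Y : Set V) : ℝ :=
  ∑ u : V, ∑ v : V, if u ∈ X ∧ v ∈ Y ∧ H.Adj u v then w u v else 0

/-- `H` (with positive symmetric weights `w`) is a `(1 ± eps)`-spectral sparsifier of the
unweighted graph `G`. -/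
def IsSpectralSparsifier {V : Type*} [Fintype V] (G H : SimpleGraph V) (w : V → V → ℝ)
    (eps : ℝ) : Prop :=
  H ≤ G ∧ (∀ u v, H.Adj u v → 0 < w u v) ∧ (∀ u v, w u v = w v u) ∧
    ∀ x : V → ℝ,
      (1 - eps) * lapQF H w x ≤ lapQF G (fun _ _ => 1) x ∧
        lapQF G (fun _ _ => 1) x ≤ (1 + eps) * lapQF H w x

/-- `H` (with positive symmetric weights `w`) is a `(1 ± eps)`-cut sparsifier of the
unweighted graph `G`. -/
def IsCutSparsifier {V : Type*} [Fintype V] (G H : SimpleGraph V) (w : V → V → ℝ)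
    (eps : ℝ) : Prop :=
  H ≤ G ∧ (∀ u v, H.Adj u v → 0 < w u v) ∧ (∀ u v, w u v = w v u) ∧
    ∀ S : Set V,
      (1 - eps) * cutWeight H w S Sᶜ ≤ cutWeight G (fun _ _ => 1) S Sᶜ ∧
        cutWeight G (fun _ _ => 1) S Sᶜ ≤ (1 + eps) * cutWeight H w S Sᶜ

/-- Effective resistance between `u` and `v` in the weighted graph `(H, w)`, via the
variational characterization `R_{u,v} = sup { (x u - x v)^2 / Q(x) : Q(x) > 0 }`. -/
noncomputable def effRes {V : Type*} [Fintype V] (H : SimpleGraph V) (w : V → V → ℝ)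
    (u v : V) : ℝ :=
  sSup {r : ℝ | ∃ x : V → ℝ, 0 < lapQF H w x ∧ r = (x u - x v) ^ 2 / lapQF H w x}



set_option maxHeartbeats 1000000

section myaux
section aux
variable {V : Type*} [Fintype V]

lemma lapQF_nonneg (H : SimpleGraph V) (w : V → V → ℝ)
    (hpos : ∀ u v, H.Adj u v → 0 < w u v) (x : V → ℝ) : 0 ≤ lapQF H w x := by
  unfold lapQF
  have : (0:ℝ) ≤ ∑ u : V, ∑ v : V, if H.Adj u v then w u v * (x u - x v) ^ 2 else 0 := by
    refine Finset.sum_nonneg fun u _ => Finset.sum_nonneg fun v _ => ?_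
    split
    · exact mul_nonneg (le_of_lt (hpos _ _ ‹_›)) (sq_nonneg _)
    · exact le_refl 0
  linarith

lemma edge_le_lapQF (H : SimpleGraph V) (w : V → V → ℝ)
    (hpos : ∀ u v, H.Adj u v → 0 < w u v) (hsym : ∀ u v, w u v = w v u)
    {a b : V} (hab : H.Adj a b) (x : V → ℝ) :
    w a b * (x a - x b) ^ 2 ≤ lapQF H w x := by
  classical
  set f : V × V → ℝ := fun p => if H.Adj p.1 p.2 then w p.1 p.2 * (x p.1 - x p.2) ^ 2 else 0 with hf
  have hrw : lapQF H w x = (1/2) * ∑ p ∈ (univ : Finset (V × V)), f p := by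
    unfold lapQF
    rw [← Finset.sum_product']
    rfl
  have hne : ((a, b) : V × V) ≠ (b, a) := by
    intro h; exact hab.ne (congrArg Prod.fst h)
  have hsub : ({(a,b), (b,a)} : Finset (V × V)) ⊆ univ := Finset.subset_univ _
  have hnonneg : ∀ p ∈ (univ : Finset (V × V)), p ∉ ({(a,b), (b,a)} : Finset (V × V)) → 0 ≤ f p := by
    intro p _ _
    simp only [hf]
    split
    · exact mul_nonneg (le_of_lt (hpos _ _ ‹_›)) (sq_nonneg _)
    · exact le_refl 0
  have hkey : ∑ p ∈ ({(a,b), (b,a)} : Finset (V × V)), f p ≤ ∑ p ∈ (univ : Finset (V × V)), f p :=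
    Finset.sum_le_sum_of_subset_of_nonneg hsub hnonneg
  rw [Finset.sum_pair hne] at hkey
  have h1 : f (a, b) = w a b * (x a - x b) ^ 2 := by simp [hf, hab]
  have h2 : f (b, a) = w a b * (x a - x b) ^ 2 := by
    simp only [hf, hab.symm, if_pos]
    rw [← hsym a b]; ring
  rw [h1, h2] at hkey
  rw [hrw]; linarith

lemma walk_bound (H : SimpleGraph V) (w : V → V → ℝ)
    (hpos : ∀ u v, H.Adj u v → 0 < w u v) (hsym : ∀ u v, w u v = w v u)
    {u v : V} (p : H.Walk u v) :
    ∃ C : ℝ, ∀ x : V → ℝ, |x u - x v| ≤ C * Real.sqrt (lapQF H w x) := by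
  induction p with
  | nil => exact ⟨0, fun x => by simp⟩
  | @cons u a v h p ih =>
      obtain ⟨C, hC⟩ := ih
      refine ⟨1 / Real.sqrt (w u a) + C, fun x => ?_⟩
      have hw : 0 < w u a := hpos _ _ h
      have hQ : 0 ≤ lapQF H w x := lapQF_nonneg H w hpos x
      have h1 : w u a * (x u - x a) ^ 2 ≤ lapQF H w x := edge_le_lapQF H w hpos hsym h x
      have h2 : (x u - x a) ^ 2 ≤ lapQF H w x / w u a := by
        rw [le_div_iff₀ hw]; linarith
      have h3 : |x u - x a| ≤ 1 / Real.sqrt (w u a) * Real.sqrt (lapQF H w x) := by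
        rw [← Real.sqrt_sq_eq_abs]
        calc Real.sqrt ((x u - x a) ^ 2) ≤ Real.sqrt (lapQF H w x / w u a) :=
              Real.sqrt_le_sqrt h2
          _ = Real.sqrt (lapQF H w x) / Real.sqrt (w u a) := Real.sqrt_div hQ _
          _ = 1 / Real.sqrt (w u a) * Real.sqrt (lapQF H w x) := by ring
      calc |x u - x v| ≤ |x u - x a| + |x a - x v| := abs_sub_le _ _ _
        _ ≤ 1 / Real.sqrt (w u a) * Real.sqrt (lapQF H w x) + C * Real.sqrt (lapQF H w x) :=
            add_le_add h3 (hC x)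
        _ = (1 / Real.sqrt (w u a) + C) * Real.sqrt (lapQF H w x) := by ring

end aux
section aux2
variable {V : Type*} [Fintype V]

lemma lapQF_indicator (H : SimpleGraph V) (w : V → V → ℝ)
    (hsym : ∀ u v, w u v = w v u) (a : V) :
    lapQF H w (fun b => if b = a then 1 else 0) =
      ∑ v : V, if H.Adj a v then w a v else 0 := by
  classical
  set δ : V → ℝ := fun b => if b = a then 1 else 0 with hδ
  set f : V → V → ℝ := fun u v => if H.Adj u v then w u v * (δ u - δ v) ^ 2 else 0 with hf
  have hfa : ∀ v, f a v = if H.Adj a v then w a v else 0 := by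
    intro v
    by_cases h : H.Adj a v
    · have hv : v ≠ a := fun e => H.irrefl (e ▸ h)
      simp [hf, h, hδ, hv]
    · simp [hf, h]
  have hfa' : ∀ u, f u a = if H.Adj a u then w a u else 0 := by
    intro u
    by_cases h : H.Adj u a
    · have hu : u ≠ a := fun e => H.irrefl (e ▸ h)
      simp only [hf, hδ, if_pos h, if_pos h.symm, hu, if_neg hu, if_pos rfl]
      rw [hsym u a]; norm_num
    · have h' : ¬ H.Adj a u := fun hh => h hh.symm
      simp [hf, h, h']
  have hzero : ∀ u v, u ≠ a → v ≠ a → f u v = 0 := by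
    intro u v hu hv
    simp [hf, hδ, hu, hv]
  have hinner : ∀ u, u ≠ a → ∑ v : V, f u v = f u a := by
    intro u hu
    refine Finset.sum_eq_single a (fun v _ hv => hzero u v hu hv) (fun h => absurd (mem_univ a) h)
  have hfaa : f a a = 0 := by simp [hf, H.irrefl]
  have hsplit : ∑ u : V, ∑ v : V, f u v = ∑ v : V, f a v + ∑ u ∈ univ.erase a, ∑ v : V, f u v := by
    rw [← Finset.add_sum_erase _ _ (mem_univ a)]
  have h2 : ∑ u ∈ univ.erase a, ∑ v : V, f u v = ∑ u ∈ univ.erase a, f u a :=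
    Finset.sum_congr rfl fun u hu => hinner u (Finset.ne_of_mem_erase hu)
  have h3 : ∑ u ∈ univ.erase a, f u a = ∑ u : V, f u a := by
    rw [← Finset.add_sum_erase _ (fun u => f u a) (mem_univ a), hfaa, zero_add]
  have h4 : ∑ v : V, f a v = ∑ v : V, if H.Adj a v then w a v else 0 :=
    Finset.sum_congr rfl fun v _ => hfa v
  have h5 : ∑ u : V, f u a = ∑ v : V, if H.Adj a v then w a v else 0 :=
    Finset.sum_congr rfl fun u _ => hfa' u
  unfold lapQF
  have : ∑ u : V, ∑ v : V, (if H.Adj u v then w u v * (δ u - δ v) ^ 2 else 0) =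
      ∑ u : V, ∑ v : V, f u v := rfl
  rw [this, hsplit, h2, h3, h4, h5]
  ring

lemma sum_deg (G : SimpleGraph V) :
    ∑ a : V, (∑ v : V, if G.Adj a v then (1:ℝ) else 0) = 2 * (G.edgeSet.ncard : ℝ) := by
  classical
  have h1 : ∀ a : V, (∑ v : V, if G.Adj a v then (1:ℝ) else 0) = (G.degree a : ℝ) := by
    intro a
    rw [Finset.sum_boole]
    congr 1
    rw [SimpleGraph.degree, SimpleGraph.neighborFinset_eq_filter]
  have h2 : ∑ a : V, (G.degree a : ℝ) = ((∑ a : V, G.degree a : ℕ) : ℝ) := by rw [Nat.cast_sum]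
  have h3 : G.edgeSet.ncard = G.edgeFinset.card := by
    rw [Set.ncard_eq_toFinset_card']
    congr 1
  rw [Finset.sum_congr rfl fun a _ => h1 a, h2, SimpleGraph.sum_degrees_eq_twice_card_edges, h3]
  push_cast
  ring

lemma dist_step (H : SimpleGraph V) {u a b : V} (h : H.Adj a b) :
    H.dist u b ≤ H.dist u a + 1 := by
  by_cases hr : H.Reachable u a
  · obtain ⟨p, hp⟩ := hr.exists_walk_length_eq_dist
    have : H.dist u b ≤ (p.concat h).length := SimpleGraph.dist_le _
    rwa [SimpleGraph.Walk.length_concat, hp] at this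
  · have hrb : ¬ H.Reachable u b := fun hub => hr (hub.trans h.symm.reachable)
    rw [SimpleGraph.dist_eq_zero_of_not_reachable hrb]
    omega

end aux2
section aux3
variable {V : Type*} [Fintype V]

lemma effRes_lower (H : SimpleGraph V) (w : V → V → ℝ)
    (hpos : ∀ u v, H.Adj u v → 0 < w u v) (hsym : ∀ u v, w u v = w v u)
    {u v : V} (p : H.Walk u v) (x : V → ℝ) (hQ : 0 < lapQF H w x) :
    (x u - x v) ^ 2 / lapQF H w x ≤ effRes H w u v := by
  obtain ⟨C, hC⟩ := walk_bound H w hpos hsym p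
  refine le_csSup ⟨C ^ 2, ?_⟩ ⟨x, hQ, rfl⟩
  rintro r ⟨y, hy, rfl⟩
  rw [div_le_iff₀ hy]
  calc (y u - y v) ^ 2 = |y u - y v| ^ 2 := (sq_abs _).symm
    _ ≤ (C * Real.sqrt (lapQF H w y)) ^ 2 := pow_le_pow_left₀ (abs_nonneg _) (hC y) 2
    _ = C ^ 2 * lapQF H w y := by rw [mul_pow, Real.sq_sqrt (lapQF_nonneg H w hpos y)]

end aux3
end myaux

/-- There is a universal constant `c > 0` such that for every `n ≥ 3`-vertex
unweighted graph `G` with `m ≥ 2` edges, every `eps ∈ (0, 1/18]`, every `(1 ± eps)`-spectral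
sparsifier `H` of `G`, and vertices `u, v` at (finite) distance `s ≥ 1` in the unweighted
version of `H`, both `R^G_{u,v}` and `R^H_{u,v}` are at least `c * s^2 / (m * log n)`. -/
theorem stmt7 :
    ∃ c : ℝ, 0 < c ∧
      ∀ (V : Type) [Fintype V] (G H : SimpleGraph V) (w : V → V → ℝ) (eps : ℝ)
        (u v : V) (s : ℕ),
        3 ≤ Fintype.card V →
        2 ≤ G.edgeSet.ncard →
        0 < eps → eps ≤ 1 / 18 →
        IsSpectralSparsifier G H w eps →
        H.Reachable u v → s = H.dist u v → 1 ≤ s →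
        c * (s : ℝ) ^ 2 / ((G.edgeSet.ncard : ℝ) * Real.log (Fintype.card V)) ≤
          effRes G (fun _ _ => 1) u v ∧
        c * (s : ℝ) ^ 2 / ((G.edgeSet.ncard : ℝ) * Real.log (Fintype.card V)) ≤
          effRes H w u v := by
  refine ⟨17/19, by norm_num, ?_⟩
  intro V _ G H w eps u v s hn hm heps heps' hsp hreach hsv hs1
  obtain ⟨hle, hpos, hwsym, hQF⟩ := hsp
  set m : ℝ := (G.edgeSet.ncard : ℝ) with hmdef
  have hm2 : (2:ℝ) ≤ m := by rw [hmdef]; exact_mod_cast hm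
  have heps1 : (0:ℝ) < 1 - eps := by linarith
  -- log lower bound
  set L : ℝ := Real.log (Fintype.card V) with hLdef
  have hcard3 : (3:ℝ) ≤ (Fintype.card V : ℝ) := by exact_mod_cast hn
  have hL1 : (1:ℝ) ≤ L := by
    rw [hLdef, Real.le_log_iff_exp_le (by linarith)]
    have := Real.exp_one_lt_d9
    linarith
  -- test vector
  set x0 : V → ℝ := fun a => ((min (H.dist u a) s : ℕ) : ℝ) with hx0
  have hx0u : x0 u = 0 := by simp [hx0, SimpleGraph.dist_self]
  have hx0v : x0 v = (s : ℝ) := by simp [hx0, ← hsv]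
  have hstep : ∀ a b, H.Adj a b → (x0 a - x0 b) ^ 2 ≤ 1 := by
    intro a b hab
    have h1 : H.dist u b ≤ H.dist u a + 1 := dist_step H hab
    have h2 : H.dist u a ≤ H.dist u b + 1 := dist_step H hab.symm
    have h3 : min (H.dist u a) s ≤ min (H.dist u b) s + 1 := by omega
    have h4 : min (H.dist u b) s ≤ min (H.dist u a) s + 1 := by omega
    have c3 : x0 a ≤ x0 b + 1 := by
      simp only [hx0]; exact_mod_cast h3
    have c4 : x0 b ≤ x0 a + 1 := by
      simp only [hx0]; exact_mod_cast h4
    nlinarith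
  -- total weight bound
  set Wsum : ℝ := ∑ a : V, ∑ b : V, (if H.Adj a b then w a b else 0) with hW
  have hWbound : (1 - eps) * Wsum ≤ 2 * m := by
    have key : ∀ a : V, (1 - eps) * (∑ b : V, if H.Adj a b then w a b else 0) ≤
        ∑ b : V, if G.Adj a b then (1:ℝ) else 0 := by
      intro a
      have h1 := (hQF (fun b => if b = a then 1 else 0)).1
      rw [lapQF_indicator H w hwsym a] at h1
      rw [lapQF_indicator G (fun _ _ => 1) (fun _ _ => rfl) a] at h1
      exact h1
    calc (1 - eps) * Wsum = ∑ a : V, (1 - eps) * (∑ b : V, if H.Adj a b then w a b else 0) := by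
          rw [hW, Finset.mul_sum]
      _ ≤ ∑ a : V, ∑ b : V, (if G.Adj a b then (1:ℝ) else 0) := Finset.sum_le_sum fun a _ => key a
      _ = 2 * m := sum_deg G
  have hQH : lapQF H w x0 ≤ (1/2) * Wsum := by
    unfold lapQF
    rw [hW]
    have : ∀ a b : V, (if H.Adj a b then w a b * (x0 a - x0 b) ^ 2 else 0) ≤
        (if H.Adj a b then w a b else 0) := by
      intro a b
      by_cases h : H.Adj a b
      · simp only [if_pos h]
        nlinarith [hpos a b h, hstep a b h, sq_nonneg (x0 a - x0 b)]
      · simp [h]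
    have hsum := Finset.sum_le_sum (fun a (_ : a ∈ univ) =>
      Finset.sum_le_sum (fun b (_ : b ∈ univ) => this a b))
    linarith
  have hQHm : (1 - eps) * lapQF H w x0 ≤ m := by nlinarith
  -- positivity
  obtain ⟨pH⟩ := hreach
  have hQHnn : 0 ≤ lapQF H w x0 := lapQF_nonneg H w hpos x0
  have hQHpos : 0 < lapQF H w x0 := by
    rcases hQHnn.lt_or_eq with h | h
    · exact h
    · exfalso
      obtain ⟨C, hC⟩ := walk_bound H w hpos hwsym pH
      have := hC x0
      rw [← h, Real.sqrt_zero, mul_zero] at this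
      rw [hx0u, hx0v] at this
      have hs1' : (1:ℝ) ≤ (s:ℝ) := by exact_mod_cast hs1
      rw [abs_of_nonpos (by linarith)] at this
      linarith
  have hQG12 := hQF x0
  have hQGpos : 0 < lapQF G (fun _ _ => 1) x0 := lt_of_lt_of_le (by nlinarith) hQG12.1
  -- numeric bounds
  have hQHle : lapQF H w x0 ≤ (18/17) * m := by nlinarith
  have hQGle : lapQF G (fun _ _ => 1) x0 ≤ (19/17) * m := by nlinarith
  have hs2 : (1:ℝ) ≤ (s:ℝ) ^ 2 := by
    have h : (1:ℝ) ≤ (s:ℝ) := by exact_mod_cast hs1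
    calc (1:ℝ) = 1 * 1 := by norm_num
      _ ≤ (s:ℝ) * (s:ℝ) := mul_le_mul h h (by norm_num) (by linarith)
      _ = (s:ℝ) ^ 2 := (sq (s:ℝ)).symm
  have hdiff : (x0 u - x0 v) ^ 2 = (s:ℝ) ^ 2 := by rw [hx0u, hx0v]; ring
  have hmL : 0 < m * L := by nlinarith
  constructor
  · refine le_trans ?_ (effRes_lower G (fun _ _ => 1) (fun _ _ _ => one_pos)
      (fun _ _ => rfl) (pH.mapLe hle) x0 hQGpos)
    rw [hdiff, div_le_div_iff₀ hmL hQGpos]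
    nlinarith [mul_le_mul_of_nonneg_left hQGle (by positivity : (0:ℝ) ≤ 17/19 * (s:ℝ)^2),
      mul_le_mul_of_nonneg_left hL1 (by nlinarith : (0:ℝ) ≤ (s:ℝ)^2 * m)]
  · refine le_trans ?_ (effRes_lower H w hpos hwsym pH x0 hQHpos)
    rw [hdiff, div_le_div_iff₀ hmL hQHpos]
    nlinarith [mul_le_mul_of_nonneg_left hQHle (by positivity : (0:ℝ) ≤ 17/19 * (s:ℝ)^2),
      mul_le_mul_of_nonneg_left hL1 (by nlinarith : (0:ℝ) ≤ (s:ℝ)^2 * m)]
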